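/- Let d ≥ 2, 0 < δ₁ a ≤ 2ε, and u ∈ C^1(ℝ^d) with u = 0 on the ball B(x₀, δ₁ a). Then ∫_{B(x₀,2ε) \ B(x₀, δ₁ a)} |u|² dx ≤ C (∫_{δ₁ a}^{2ε} r^{d-1} dr)(∫_{δ₁ a}^{2ε} s^{1-d} ds) ∫_{B(x₀,2ε) \ B(x₀, δ₁ a)} |∇u|² dx for a constant C depending only on d. -/

import Mathlib

/-!
Along a ray `s ↦ x₀ + s • ω` the function vanishes at `s = ρ` (it vanishes on the open ball
and is continuous), so `u (x₀ + r • ω) = ∫_ρ^r ∂ₛ u (x₀ + s • ω) ds`. Cauchy–Schwarz with the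
weights `s ^ (1 - d)` and `s ^ (d - 1)` bounds `u (x₀ + r • ω) ^ 2` by
`(∫_ρ^R s ^ (1 - d) ds) * ∫_ρ^R s ^ (d - 1) ‖Du (x₀ + s • ω)‖ ^ 2 ds`, uniformly in `r ∈ [ρ, R)`.
Integrating against `r ^ (d - 1) dr` and over the sphere, the polar decomposition of Haar measure
(`μ ≃ μ.toSphere ⊗ r ^ (d - 1) dr`) turns both sides into integrals over the annulus, with `C = 1`.
-/

open MeasureTheory Metric Set
open scoped ENNReal

theorem ENNReal.sq_lintegral_le_of_sq_le_mul {α : Type*} [MeasurableSpace α] {μ : Measure α}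
    {f g h : α → ℝ≥0∞} (hg : AEMeasurable g μ) (hh : AEMeasurable h μ)
    (hfgh : ∀ᵐ x ∂μ, f x ^ 2 ≤ g x * h x) :
    (∫⁻ x, f x ∂μ) ^ 2 ≤ (∫⁻ x, g x ∂μ) * ∫⁻ x, h x ∂μ := by
  have hsqrt : ∀ a : ℝ≥0∞, (a ^ (2⁻¹ : ℝ)) ^ 2 = a := fun a ↦ by
    rw [← ENNReal.rpow_natCast, ← ENNReal.rpow_mul]; norm_num
  have hf : ∫⁻ x, f x ∂μ ≤ ∫⁻ x, g x ^ (2⁻¹ : ℝ) * h x ^ (2⁻¹ : ℝ) ∂μ := by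
    refine lintegral_mono_ae (hfgh.mono fun x hx ↦ ?_)
    rw [← ENNReal.mul_rpow_of_nonneg _ _ (by norm_num), ENNReal.le_rpow_inv_iff two_pos,
      ENNReal.rpow_two]
    exact hx
  calc (∫⁻ x, f x ∂μ) ^ 2
      ≤ ((∫⁻ x, g x ∂μ) ^ (2⁻¹ : ℝ) * (∫⁻ x, h x ∂μ) ^ (2⁻¹ : ℝ)) ^ 2 :=
        pow_le_pow_left' (hf.trans (ENNReal.lintegral_mul_norm_pow_le hg hh (by norm_num)
          (by norm_num) (by norm_num))) 2
    _ = (∫⁻ x, g x ∂μ) * ∫⁻ x, h x ∂μ := by rw [mul_pow, hsqrt, hsqrt]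

theorem enorm_sq_le_of_hasDerivAt_of_eq_zero {φ φ' : ℝ → ℝ} {ρ R r : ℝ} (p : ℝ)
    (hρ : 0 < ρ) (hr : r ∈ Ico ρ R) (hφ : ∀ s, HasDerivAt φ (φ' s) s) (hφ' : Continuous φ')
    (hφρ : φ ρ = 0) :
    ‖φ r‖ₑ ^ 2 ≤ (∫⁻ s in Ico ρ R, ENNReal.ofReal (s ^ (-p))) *
      ∫⁻ s in Ico ρ R, ENNReal.ofReal (s ^ p) * ‖φ' s‖ₑ ^ 2 := by
  have hftc : φ r = ∫ s in Ioc ρ r, φ' s := by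
    rw [← intervalIntegral.integral_of_le hr.1, intervalIntegral.integral_eq_sub_of_hasDerivAt
      (fun s _ ↦ hφ s) (hφ'.intervalIntegrable _ _), hφρ, sub_zero]
  have hφr : ‖φ r‖ₑ ≤ ∫⁻ s in Ico ρ R, ‖φ' s‖ₑ :=
    hftc ▸ (enorm_integral_le_lintegral_enorm _).trans
      (lintegral_mono_set fun s hs ↦ ⟨hs.1.le, hs.2.trans_lt hr.2⟩)
  refine (pow_le_pow_left' hφr 2).trans (ENNReal.sq_lintegral_le_of_sq_le_mul
    (by fun_prop) (by fun_prop) ?_)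
  filter_upwards [ae_restrict_mem measurableSet_Ico] with s hs
  have hs₀ : 0 < s := hρ.trans_le hs.1
  rw [← mul_assoc, ← ENNReal.ofReal_mul (Real.rpow_nonneg hs₀.le _), ← Real.rpow_add hs₀,
    neg_add_cancel, Real.rpow_zero, ENNReal.ofReal_one, one_mul]

theorem integral_norm_sq_eq_toReal_lintegral {α P : Type*} [MeasurableSpace α] {μ : Measure α}
    [NormedAddCommGroup P] {f : α → P} (hf : AEStronglyMeasurable f μ) :
    ∫ x, ‖f x‖ ^ 2 ∂μ = (∫⁻ x, ‖f x‖ₑ ^ 2 ∂μ).toReal := by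
  rw [integral_eq_lintegral_of_nonneg_ae (f := fun x ↦ ‖f x‖ ^ 2)
    (ae_of_all _ fun _ ↦ by positivity) (hf.norm.pow 2)]
  simp_rw [ENNReal.ofReal_pow (norm_nonneg _), ofReal_norm]

theorem lintegral_Ico_ofReal_rpow {ρ R : ℝ} (hρ : 0 < ρ) (hρR : ρ ≤ R) (p : ℝ) :
    ∫⁻ r in Ico ρ R, ENNReal.ofReal (r ^ p) = ENNReal.ofReal (∫ r in ρ..R, r ^ p) := by
  rw [Measure.restrict_congr_set Ico_ae_eq_Ioc, intervalIntegral.integral_of_le hρR,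
    ofReal_integral_eq_lintegral_ofReal]
  · refine (intervalIntegral.intervalIntegrable_rpow (Or.inr fun h ↦ ?_)).1
    rw [uIcc_of_le hρR] at h
    exact hρ.not_ge h.1
  · filter_upwards [ae_restrict_mem measurableSet_Ioc] with r hr
    exact Real.rpow_nonneg (hρ.le.trans hr.1.le) p

theorem ball_sdiff_ball_eq_preimage {E : Type*} [SeminormedAddCommGroup E] (x₀ : E) (ρ R : ℝ) :
    ball x₀ R \ ball x₀ ρ = (‖· - x₀‖) ⁻¹' Ico ρ R := by
  ext x
  simp [dist_eq_norm, and_comm]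

section
variable {E : Type*} [NormedAddCommGroup E] [NormedSpace ℝ E]

theorem enorm_sq_le_of_forall_mem_ball_eq_zero {x₀ ω : E} (hω : ‖ω‖ = 1) {ρ R r : ℝ} (p : ℝ)
    (hρ : 0 < ρ) (hr : r ∈ Ico ρ R) {v : E → ℝ} (hv : ContDiff ℝ 1 v)
    (h0 : ∀ x ∈ ball x₀ ρ, v x = 0) :
    ‖v (x₀ + r • ω)‖ₑ ^ 2 ≤ (∫⁻ s in Ico ρ R, ENNReal.ofReal (s ^ (-p))) *
      ∫⁻ s in Ico ρ R, ENNReal.ofReal (s ^ p) * ‖fderiv ℝ v (x₀ + s • ω)‖ₑ ^ 2 := by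
  have hderiv (s : ℝ) : HasDerivAt (fun t ↦ v (x₀ + t • ω)) (fderiv ℝ v (x₀ + s • ω) ω) s := by
    have h := (hv.differentiable one_ne_zero _).hasFDerivAt.comp_hasDerivAt s
      (((hasDerivAt_id s).smul_const ω).const_add x₀)
    simp only [id, one_smul] at h
    exact h
  have hcont : Continuous (fderiv ℝ v) := hv.continuous_fderiv one_ne_zero
  have hvρ : v (x₀ + ρ • ω) = 0 := by
    refine EqOn.closure h0 hv.continuous continuous_const ?_
    rw [closure_ball x₀ hρ.ne', mem_closedBall, dist_self_add_left, norm_smul, hω, mul_one,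
      Real.norm_of_nonneg hρ.le]
  refine (enorm_sq_le_of_hasDerivAt_of_eq_zero p hρ hr hderiv (by fun_prop) hvρ).trans ?_
  gcongr with s
  have hω' : ‖ω‖ₑ = 1 := by rw [← ofReal_norm, hω, ENNReal.ofReal_one]
  simpa [hω'] using (fderiv ℝ v (x₀ + s • ω)).le_opENorm ω
end

section
variable {E : Type*} [NormedAddCommGroup E] [NormedSpace ℝ E] [FiniteDimensional ℝ E]
  [MeasurableSpace E] [BorelSpace E] [Nontrivial E] (μ : Measure E) [μ.IsAddHaarMeasure]

theorem lintegral_eq_lintegral_toSphere_lintegral_Ioi {f : E → ℝ≥0∞} (hf : Measurable f) :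
    ∫⁻ x, f x ∂μ = ∫⁻ ω : sphere (0 : E) 1, ∫⁻ r in Ioi (0 : ℝ),
      ENNReal.ofReal (r ^ ((Module.finrank ℝ E : ℝ) - 1)) * f (r • (ω : E)) ∂volume
        ∂μ.toSphere := by
  have hcomp : Measurable fun p : sphere (0 : E) 1 × Ioi (0 : ℝ) ↦ f (p.2.1 • p.1.1) :=
    hf.comp (continuous_subtype_val.snd'.smul continuous_subtype_val.fst').measurable
  calc ∫⁻ x, f x ∂μ = ∫⁻ x : ({0}ᶜ : Set E), f x ∂μ.comap (↑) := by
        rw [lintegral_subtype_comap (measurableSet_singleton _).compl, restrict_compl_singleton]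
    _ = ∫⁻ p, f (p.2.1 • p.1.1) ∂μ.toSphere.prod (.volumeIoiPow (Module.finrank ℝ E - 1)) := by
        rw [← (μ.measurePreserving_homeomorphUnitSphereProd).lintegral_comp hcomp]
        refine lintegral_congr fun x ↦ ?_
        simp [smul_inv_smul₀ (norm_ne_zero_iff.2 x.2)]
    _ = _ := by
        rw [lintegral_prod _ hcomp.aemeasurable]
        refine lintegral_congr fun ω ↦ ?_
        have hg : Measurable fun r : Ioi (0 : ℝ) ↦ f (r.1 • (ω : E)) := hf.comp (by fun_prop)
        rw [Measure.volumeIoiPow, lintegral_withDensity_eq_lintegral_mul _ (by fun_prop) hg]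
        refine (lintegral_subtype_comap measurableSet_Ioi
          (fun r ↦ ENNReal.ofReal (r ^ (Module.finrank ℝ E - 1)) * f (r • (ω : E)))).trans ?_
        refine setLIntegral_congr_fun measurableSet_Ioi fun r _ ↦ ?_
        rw [← Real.rpow_natCast, Nat.cast_pred Module.finrank_pos]

theorem setLIntegral_preimage_norm_sub_eq (x₀ : E) {I : Set ℝ} (hI : MeasurableSet I)
    (hI₀ : I ⊆ Ioi 0) {f : E → ℝ≥0∞} (hf : Measurable f) :
    ∫⁻ x in (‖· - x₀‖) ⁻¹' I, f x ∂μ = ∫⁻ ω : sphere (0 : E) 1, ∫⁻ r in I,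
      ENNReal.ofReal (r ^ ((Module.finrank ℝ E : ℝ) - 1)) * f (x₀ + r • (ω : E)) ∂volume
        ∂μ.toSphere := by
  have hS : MeasurableSet ((‖· - x₀‖) ⁻¹' I) := (by fun_prop : Measurable (‖· - x₀‖)) hI
  have hf' : Measurable fun y ↦ ((‖· - x₀‖) ⁻¹' I).indicator f (x₀ + y) :=
    (hf.indicator hS).comp (measurable_const_add x₀)
  rw [← lintegral_indicator hS, ← lintegral_add_left_eq_self (μ := μ) _ x₀,
    lintegral_eq_lintegral_toSphere_lintegral_Ioi μ hf']
  refine lintegral_congr fun ω ↦ ?_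
  rw [← Measure.restrict_restrict_of_subset hI₀, ← lintegral_indicator hI]
  refine setLIntegral_congr_fun measurableSet_Ioi fun r (hr : 0 < r) ↦ ?_
  have hnorm : ‖x₀ + r • (ω : E) - x₀‖ = r := by
    rw [add_sub_cancel_left, norm_smul, mem_sphere_zero_iff_norm.1 ω.2, mul_one,
      Real.norm_of_nonneg hr.le]
  have hmem : x₀ + r • (ω : E) ∈ (‖· - x₀‖) ⁻¹' I ↔ r ∈ I := by rw [mem_preimage, hnorm]
  by_cases h : r ∈ I <;> simp [h, hmem]

theorem setLIntegral_annulus_enorm_sq_le (x₀ : E) {ρ R : ℝ} (hρ : 0 < ρ) {v : E → ℝ}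
    (hv : ContDiff ℝ 1 v) (h0 : ∀ x ∈ ball x₀ ρ, v x = 0) :
    ∫⁻ x in ball x₀ R \ ball x₀ ρ, ‖v x‖ₑ ^ 2 ∂μ ≤
      (∫⁻ r in Ico ρ R, ENNReal.ofReal (r ^ ((Module.finrank ℝ E : ℝ) - 1))) *
        (∫⁻ s in Ico ρ R, ENNReal.ofReal (s ^ (1 - (Module.finrank ℝ E : ℝ)))) *
        ∫⁻ x in ball x₀ R \ ball x₀ ρ, ‖fderiv ℝ v x‖ₑ ^ 2 ∂μ := by
  set p : ℝ := Module.finrank ℝ E - 1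
  have hvc : Continuous v := hv.continuous
  have hv'c : Continuous (fderiv ℝ v) := hv.continuous_fderiv one_ne_zero
  have hI₀ : Ico ρ R ⊆ Ioi 0 := fun r hr ↦ hρ.trans_le hr.1
  have hray (ω : sphere (0 : E) 1) (r : ℝ) (hr : r ∈ Ico ρ R) :=
    enorm_sq_le_of_forall_mem_ball_eq_zero (mem_sphere_zero_iff_norm.1 ω.2) p hρ hr hv h0
  rw [show 1 - (Module.finrank ℝ E : ℝ) = -p by ring, ball_sdiff_ball_eq_preimage,
    setLIntegral_preimage_norm_sub_eq μ x₀ measurableSet_Ico hI₀ (by fun_prop),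
    setLIntegral_preimage_norm_sub_eq μ x₀ measurableSet_Ico hI₀ (by fun_prop)]
  have hK : Measurable fun ω : sphere (0 : E) 1 ↦ ∫⁻ s in Ico ρ R,
      ENNReal.ofReal (s ^ p) * ‖fderiv ℝ v (x₀ + s • (ω : E))‖ₑ ^ 2 :=
    (by fun_prop : Measurable fun q : sphere (0 : E) 1 × ℝ ↦
      ENNReal.ofReal (q.2 ^ p) * ‖fderiv ℝ v (x₀ + q.2 • (q.1 : E))‖ₑ ^ 2).lintegral_prod_right'
  calc _ ≤ ∫⁻ ω : sphere (0 : E) 1, ∫⁻ r in Ico ρ R, ENNReal.ofReal (r ^ p) *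
          ((∫⁻ s in Ico ρ R, ENNReal.ofReal (s ^ (-p))) * ∫⁻ s in Ico ρ R,
            ENNReal.ofReal (s ^ p) * ‖fderiv ℝ v (x₀ + s • (ω : E))‖ₑ ^ 2) ∂volume ∂μ.toSphere :=
        lintegral_mono fun ω ↦ setLIntegral_mono' measurableSet_Ico fun r hr ↦
          mul_le_mul_right (hray ω r hr) _
    _ = _ := by
        simp_rw [lintegral_mul_const _
          (by fun_prop : Measurable fun r : ℝ ↦ ENNReal.ofReal (r ^ p))]
        rw [lintegral_const_mul _ (hK.const_mul _), lintegral_const_mul _ hK, mul_assoc]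

theorem setIntegral_annulus_sq_le (x₀ : E) {ρ R : ℝ} (hρ : 0 < ρ) (hρR : ρ ≤ R) {v : E → ℝ}
    (hv : ContDiff ℝ 1 v) (h0 : ∀ x ∈ ball x₀ ρ, v x = 0) :
    ∫ x in ball x₀ R \ ball x₀ ρ, v x ^ 2 ∂μ ≤
      (∫ r in ρ..R, r ^ ((Module.finrank ℝ E : ℝ) - 1)) *
        (∫ s in ρ..R, s ^ (1 - (Module.finrank ℝ E : ℝ))) *
        ∫ x in ball x₀ R \ ball x₀ ρ, ‖fderiv ℝ v x‖ ^ 2 ∂μ := by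
  have hfin : ∫⁻ x in ball x₀ R \ ball x₀ ρ, ‖fderiv ℝ v x‖ₑ ^ 2 ∂μ ≠ ⊤ := by
    have h : ∫⁻ x in ball x₀ R \ ball x₀ ρ, ENNReal.ofReal (‖fderiv ℝ v x‖ ^ 2) ∂μ < ⊤ :=
      IntegrableOn.setLIntegral_lt_top <| (((hv.continuous_fderiv one_ne_zero).norm.pow 2
        ).continuousOn.integrableOn_compact (isCompact_closedBall x₀ R)).mono_set
        (sdiff_subset.trans ball_subset_closedBall)
    simp_rw [ENNReal.ofReal_pow (norm_nonneg _), ofReal_norm] at h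
    exact h.ne
  have hA₀ : 0 ≤ ∫ r in ρ..R, r ^ ((Module.finrank ℝ E : ℝ) - 1) :=
    intervalIntegral.integral_nonneg hρR fun r hr ↦ Real.rpow_nonneg (hρ.le.trans hr.1) _
  have hB₀ : 0 ≤ ∫ s in ρ..R, s ^ (1 - (Module.finrank ℝ E : ℝ)) :=
    intervalIntegral.integral_nonneg hρR fun r hr ↦ Real.rpow_nonneg (hρ.le.trans hr.1) _
  have key := setLIntegral_annulus_enorm_sq_le μ x₀ (R := R) hρ hv h0
  rw [lintegral_Ico_ofReal_rpow hρ hρR, lintegral_Ico_ofReal_rpow hρ hρR] at key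
  simp_rw [← sq_abs (v _), ← Real.norm_eq_abs]
  rw [integral_norm_sq_eq_toReal_lintegral hv.continuous.aestronglyMeasurable,
    integral_norm_sq_eq_toReal_lintegral (hv.continuous_fderiv one_ne_zero).aestronglyMeasurable]
  calc _ ≤ _ := ENNReal.toReal_mono (by finiteness) key
    _ = _ := by rw [ENNReal.toReal_mul, ENNReal.toReal_mul, ENNReal.toReal_ofReal hA₀,
          ENNReal.toReal_ofReal hB₀]
end

theorem stmt_1 (d : ℕ) (hd : 2 ≤ d) :
    ∃ C > 0, ∀ (δ₁ a ε : ℝ), 0 < δ₁ * a → δ₁ * a ≤ 2 * ε →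
      ∀ x₀ : EuclideanSpace ℝ (Fin d), ∀ u : EuclideanSpace ℝ (Fin d) → ℝ,
      ContDiff ℝ 1 u → (∀ x ∈ ball x₀ (δ₁ * a), u x = 0) →
      (∫ x in ball x₀ (2 * ε) \ ball x₀ (δ₁ * a), (u x) ^ 2) ≤
        C * (∫ r in (δ₁ * a)..(2 * ε), r ^ ((d : ℝ) - 1)) *
          (∫ s in (δ₁ * a)..(2 * ε), s ^ (1 - (d : ℝ))) *
          ∫ x in ball x₀ (2 * ε) \ ball x₀ (δ₁ * a), ‖fderiv ℝ u x‖ ^ 2 := by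
  have : Nontrivial (EuclideanSpace ℝ (Fin d)) :=
    Module.nontrivial_of_finrank_pos (R := ℝ) (by rw [finrank_euclideanSpace_fin]; omega)
  refine ⟨1, one_pos, fun δ₁ a ε hρ hρR x₀ u hu h0 ↦ ?_⟩
  simpa [finrank_euclideanSpace_fin] using setIntegral_annulus_sq_le volume x₀ hρ hρR hu h0
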